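/- (Gagliardo–Nirenberg interpolation in 1D) For Λ ⊂ ℝ a bounded interval there is a constant C such that for every u ∈ H¹(Λ): ‖u‖⁶_{L⁶(Λ)} ≤ C ‖u‖²_{H¹(Λ)} ‖u‖⁴_{L²(Λ)}. -/

import Mathlib

open MeasureTheory Set

/-! For `u ∈ C¹[a, b]` the fundamental theorem of calculus applied to `u²` shows that `u²`
oscillates by at most `2 ∫ |u| |u'|`; averaging then gives
`sup u² ≤ ‖u‖₂² / (b - a) + 2 ∫ |u| |u'|`, and `∫ |u| |u'| ≤ ‖u‖₂ ‖u'‖₂` by Cauchy–Schwarz.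
Finally `‖u‖₆⁶ ≤ (sup u²)² ‖u‖₂²`, and expanding the square gives the bound with
`C = 2 / (b - a)² + 8`. -/

theorem sq_integral_mul_le_integral_sq_mul_integral_sq {α : Type*} [MeasurableSpace α]
    {μ : Measure α} {f g : α → ℝ} (hf : Integrable (fun x => f x ^ 2) μ)
    (hg : Integrable (fun x => g x ^ 2) μ) (hfg : Integrable (fun x => f x * g x) μ) :
    (∫ x, f x * g x ∂μ) ^ 2 ≤ (∫ x, f x ^ 2 ∂μ) * ∫ x, g x ^ 2 ∂μ := by
  have hquad : ∀ t : ℝ,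
      0 ≤ (∫ x, g x ^ 2 ∂μ) * (t * t) + 2 * (∫ x, f x * g x ∂μ) * t + ∫ x, f x ^ 2 ∂μ := by
    intro t
    have hexpand : ∫ x, (f x + t * g x) ^ 2 ∂μ =
        (∫ x, g x ^ 2 ∂μ) * (t * t) + 2 * (∫ x, f x * g x ∂μ) * t + ∫ x, f x ^ 2 ∂μ := by
      have hpoint : (fun x => (f x + t * g x) ^ 2) =
          fun x => f x ^ 2 + 2 * t * (f x * g x) + t ^ 2 * g x ^ 2 := by
        ext x; ring
      rw [hpoint, integral_add, integral_add, integral_const_mul, integral_const_mul]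
      · ring
      exacts [hf, hfg.const_mul _, hf.add (hfg.const_mul _), hg.const_mul _]
    exact hexpand ▸ integral_nonneg fun x => sq_nonneg _
  have := discrim_le_zero hquad
  rw [discrim] at this
  nlinarith

theorem ContDiffOn.hasDerivAt_derivWithin_Icc {u : ℝ → ℝ} {a b t : ℝ}
    (hu : ContDiffOn ℝ 1 u (Icc a b)) (ht : t ∈ Ioo a b) :
    HasDerivAt u (derivWithin u (Icc a b) t) t :=
  ((hu.differentiableOn one_ne_zero t (Ioo_subset_Icc_self ht)).hasDerivWithinAt).hasDerivAt
    (Icc_mem_nhds ht.1 ht.2)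

theorem abs_sub_le_integral_of_abs_deriv_le {f B : ℝ → ℝ} {a b x y : ℝ}
    (hfc : ContinuousOn f (Icc a b)) (hfd : DifferentiableOn ℝ f (Ioo a b))
    (hfB : ∀ t ∈ Ioo a b, |deriv f t| ≤ B t) (hB : IntervalIntegrable B volume a b)
    (hx : x ∈ Icc a b) (hy : y ∈ Icc a b) :
    |f y - f x| ≤ ∫ t in a..b, B t := by
  wlog hxy : x ≤ y generalizing x y
  · rw [abs_sub_comm]
    exact this hy hx (le_of_not_ge hxy)
  have hB0 : 0 ≤ᵐ[volume.restrict (Ioc a b)] B := by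
    rw [Measure.restrict_congr_set Ioo_ae_eq_Ioc.symm]
    exact ae_restrict_of_forall_mem measurableSet_Ioo fun t ht => (abs_nonneg _).trans (hfB t ht)
  calc |f y - f x| ≤ ∫ t in x..y, B t :=
        norm_sub_le_integral_of_norm_deriv_le_of_le hxy (hfc.mono (Icc_subset_Icc hx.1 hy.2))
          (hfd.mono (Ioo_subset_Ioo hx.1 hy.2))
          (.of_forall fun t ht => hfB t (Ioo_subset_Ioo hx.1 hy.2 ht))
          (hB.mono_set (uIcc_subset_uIcc (Icc_subset_uIcc hx) (Icc_subset_uIcc hy)))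
    _ ≤ ∫ t in a..b, B t := intervalIntegral.integral_mono_interval hx.1 hxy hy.2 hB0 hB

theorem sq_le_integral_sq_div_add_two_integral_abs_mul_abs_derivWithin {u : ℝ → ℝ} {a b x : ℝ}
    (hab : a < b) (hu : ContDiffOn ℝ 1 u (Icc a b)) (hx : x ∈ Icc a b) :
    u x ^ 2 ≤ (∫ t in a..b, u t ^ 2) / (b - a) +
      2 * ∫ t in a..b, |u t| * |derivWithin u (Icc a b) t| := by
  set u' := derivWithin u (Icc a b)
  have hu'c : ContinuousOn u' (Icc a b) :=
    hu.continuousOn_derivWithin (uniqueDiffOn_Icc hab) le_rfl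
  have hsq : ∀ t ∈ Ioo a b, HasDerivAt (fun t => u t ^ 2) (2 * u t * u' t) t := fun t ht => by
    simpa using (hu.hasDerivAt_derivWithin_Icc ht).fun_pow 2
  set S := ∫ t in a..b, |u t| * |u' t|
  have hosc : ∀ y ∈ Icc a b, u x ^ 2 - 2 * S ≤ u y ^ 2 := by
    intro y hy
    have := abs_sub_le_integral_of_abs_deriv_le (f := fun t => u t ^ 2)
      (B := fun t => 2 * (|u t| * |u' t|)) (hu.continuousOn.pow 2)
      (fun t ht => (hsq t ht).differentiableAt.differentiableWithinAt)
      (fun t ht => by rw [(hsq t ht).deriv, abs_mul, abs_mul, abs_two, mul_assoc])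
      ((continuousOn_const.mul (hu.continuousOn.abs.mul hu'c.abs)).intervalIntegrable_of_Icc
        hab.le) hy hx
    rw [intervalIntegral.integral_const_mul] at this
    linarith [(abs_le.mp this).2]
  have hmean : ∫ _ in a..b, (u x ^ 2 - 2 * S) ≤ ∫ t in a..b, u t ^ 2 :=
    intervalIntegral.integral_mono_on hab.le intervalIntegrable_const
      ((hu.continuousOn.pow 2).intervalIntegrable_of_Icc hab.le) hosc
  rw [intervalIntegral.integral_const, smul_eq_mul, mul_comm, ← le_div_iff₀ (sub_pos.2 hab)]
    at hmean
  exact sub_le_iff_le_add.mp hmean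

theorem integral_abs_pow_six_le {u : ℝ → ℝ} {a b M : ℝ} (hab : a ≤ b)
    (hu : ContinuousOn u (Icc a b)) (hM : ∀ x ∈ Icc a b, u x ^ 2 ≤ M) :
    ∫ x in a..b, |u x| ^ 6 ≤ M ^ 2 * ∫ x in a..b, u x ^ 2 := by
  rw [← intervalIntegral.integral_const_mul]
  refine intervalIntegral.integral_mono_on hab ((hu.abs.pow 6).intervalIntegrable_of_Icc hab)
    (((hu.pow 2).intervalIntegrable_of_Icc hab).const_mul _) fun x hx => ?_
  calc |u x| ^ 6 = (u x ^ 2) ^ 2 * u x ^ 2 := by rw [← sq_abs (u x)]; ring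
    _ ≤ M ^ 2 * u x ^ 2 := by gcongr; exact hM x hx

theorem sq_div_add_two_mul_mul_le_of_sq_le_mul {d L K S : ℝ} (hL : 0 ≤ L) (hK : 0 ≤ K)
    (hS : S ^ 2 ≤ L * K) :
    (L / d + 2 * S) ^ 2 * L ≤ (2 / d ^ 2 + 8) * (L + K) * L ^ 2 := by
  have hsq : (L / d + 2 * S) ^ 2 ≤ 2 / d ^ 2 * L ^ 2 + 8 * (L * K) := by
    have hsplit : 2 / d ^ 2 * L ^ 2 = 2 * (L / d) ^ 2 := by ring
    nlinarith [sq_nonneg (L / d - 2 * S)]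
  have hc : 0 ≤ 2 / d ^ 2 := by positivity
  nlinarith [mul_le_mul_of_nonneg_right hsq hL, mul_nonneg (mul_nonneg hc hK) (sq_nonneg L),
    pow_nonneg hL 3]

/-- Gagliardo–Nirenberg interpolation in 1D: on a bounded interval `(a,b)` there is a
constant `C` such that `‖u‖⁶_{L⁶} ≤ C ‖u‖²_{H¹} ‖u‖⁴_{L²}` for every `u ∈ H¹`,
stated here for continuously differentiable functions. -/
theorem gagliardo_nirenberg_1d (a b : ℝ) (hab : a < b) :
    ∃ C : ℝ, 0 < C ∧ ∀ u : ℝ → ℝ, ContDiffOn ℝ 1 u (Set.Icc a b) →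
      (∫ x in a..b, |u x| ^ 6) ≤
        C * ((∫ x in a..b, (u x) ^ 2) + ∫ x in a..b, (derivWithin u (Set.Icc a b) x) ^ 2) *
          (∫ x in a..b, (u x) ^ 2) ^ 2 := by
  refine ⟨2 / (b - a) ^ 2 + 8, by positivity, fun u hu => ?_⟩
  set u' := derivWithin u (Icc a b)
  have hu'c : ContinuousOn u' (Icc a b) :=
    hu.continuousOn_derivWithin (uniqueDiffOn_Icc hab) le_rfl
  have hint : ∀ {f : ℝ → ℝ}, ContinuousOn f (Icc a b) → IntegrableOn f (Ioc a b) :=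
    fun hf => (hf.integrableOn_Icc).mono_set Ioc_subset_Icc_self
  have hCS : (∫ x in a..b, |u x| * |u' x|) ^ 2 ≤
      (∫ x in a..b, u x ^ 2) * ∫ x in a..b, u' x ^ 2 := by
    simpa only [intervalIntegral.integral_of_le hab.le, sq_abs] using
      sq_integral_mul_le_integral_sq_mul_integral_sq (hint (hu.continuousOn.abs.pow 2))
        (hint (hu'c.abs.pow 2)) (hint (hu.continuousOn.abs.mul hu'c.abs))
  calc ∫ x in a..b, |u x| ^ 6
      ≤ ((∫ x in a..b, u x ^ 2) / (b - a) + 2 * ∫ x in a..b, |u x| * |u' x|) ^ 2 *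
          ∫ x in a..b, u x ^ 2 :=
        integral_abs_pow_six_le hab.le hu.continuousOn fun x hx =>
          sq_le_integral_sq_div_add_two_integral_abs_mul_abs_derivWithin hab hu hx
    _ ≤ _ := sq_div_add_two_mul_mul_le_of_sq_le_mul
        (intervalIntegral.integral_nonneg hab.le fun x _ => sq_nonneg _)
        (intervalIntegral.integral_nonneg hab.le fun x _ => sq_nonneg _) hCS
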